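/- arXiv:math/9911227 — 4 statements merged into one kernel-verified Lean document; each statement's English description precedes it below -/
import Mathlib

section
/- If a graph G has a partial graph (spanning subgraph) H that is α⁻-stable and satisfies α(H) = α(G), then G itself is α⁻-stable. -/
open Finset

variable {V : Type*}

/-- A stable (independent) set of vertices of `G`. -/
def IsStableSet (G : SimpleGraph V) (S : Finset V) : Prop :=
  ∀ u ∈ S, ∀ v ∈ S, ¬ G.Adj u v

/-- The stability number `α(G)`: the maximum cardinality of a stable set. -/
noncomputable def stabNum (G : SimpleGraph V) [Fintype V] : ℕ :=
  sSup {n : ℕ | ∃ S : Finset V, IsStableSet G S ∧ S.card = n}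

/-- A stability system of `G`: a stable set of maximum cardinality. -/
def IsStabSystem (G : SimpleGraph V) [Fintype V] (S : Finset V) : Prop :=
  IsStableSet G S ∧ S.card = stabNum G

/-- `G` is α⁻-stable: deleting any edge leaves the stability number unchanged. -/
def AlphaMinusStable (G : SimpleGraph V) [Fintype V] : Prop :=
  ∀ u v : V, G.Adj u v → stabNum (G.deleteEdges {s(u, v)}) = stabNum G

/-- `G` is α⁺-stable: adding any edge of the complement leaves the stability
number unchanged. -/
def AlphaPlusStable (G : SimpleGraph V) [Fintype V] : Prop :=
  ∀ u v : V, u ≠ v → ¬ G.Adj u v →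
    stabNum (G ⊔ SimpleGraph.fromEdgeSet {s(u, v)}) = stabNum G

/-- A matching of `G`, viewed as a set of pairwise non-incident edges. -/
def IsMatchingSet (G : SimpleGraph V) (M : Finset (Sym2 V)) : Prop :=
  (↑M : Set (Sym2 V)) ⊆ G.edgeSet ∧
    ∀ e ∈ M, ∀ f ∈ M, e ≠ f → ∀ v : V, ¬ (v ∈ e ∧ v ∈ f)

/-- The matching number `μ(G)`. -/
noncomputable def matchNum (G : SimpleGraph V) [Fintype V] : ℕ :=
  sSup {n : ℕ | ∃ M : Finset (Sym2 V), IsMatchingSet G M ∧ M.card = n}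

/-- A maximum matching of `G`. -/
def IsMaximumMatching (G : SimpleGraph V) [Fintype V] (M : Finset (Sym2 V)) : Prop :=
  IsMatchingSet G M ∧ M.card = matchNum G

/-- A perfect matching of `G`: a matching covering every vertex. -/
def IsPerfectMatchingSet (G : SimpleGraph V) (M : Finset (Sym2 V)) : Prop :=
  IsMatchingSet G M ∧ ∀ v : V, ∃ e ∈ M, v ∈ e

/-- A pendant vertex: a vertex of degree one. -/
def IsPendant (G : SimpleGraph V) (v : V) : Prop :=
  (G.neighborSet v).ncard = 1

/-- A set `D` is 2-dominating: every vertex outside `D` has at least two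
neighbors in `D`. -/
def Is2Dominating (G : SimpleGraph V) (D : Finset V) : Prop :=
  ∀ v : V, v ∉ D → 2 ≤ ({u : V | u ∈ D ∧ G.Adj v u}).ncard

/-- A chordal graph: no induced cycle on four or more vertices. -/
def IsChordal (G : SimpleGraph V) : Prop :=
  ∀ n : ℕ, 4 ≤ n → IsEmpty (SimpleGraph.cycleGraph n ↪g G)

/-- A bipartite graph: the vertex set is partitioned into two stable sets. -/
def IsBipartiteGr (G : SimpleGraph V) [Fintype V] [DecidableEq V] : Prop :=
  ∃ C : Finset V, IsStableSet G C ∧ IsStableSet G Cᶜ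

/-- A strong unique independence graph: a graph with a unique stability system
whose complement is also stable. -/
def IsStrongUniqueIndep (G : SimpleGraph V) [Fintype V] [DecidableEq V] : Prop :=
  ∃ S : Finset V, IsStabSystem G S ∧ (∀ S' : Finset V, IsStabSystem G S' → S' = S) ∧
    IsStableSet G Sᶜ

/-- A bistable bipartite graph: its two color classes are its only two
stability systems. -/
def IsBistable (G : SimpleGraph V) [Fintype V] [DecidableEq V] : Prop :=
  ∃ A : Finset V, IsStableSet G A ∧ IsStableSet G Aᶜ ∧
    IsStabSystem G A ∧ IsStabSystem G Aᶜ ∧ A ≠ Aᶜ ∧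
    ∀ S : Finset V, IsStabSystem G S → S = A ∨ S = Aᶜ

/-- A vertex cover of `G`. -/
def IsVertexCover (G : SimpleGraph V) (C : Finset V) : Prop :=
  ∀ u v : V, G.Adj u v → u ∈ C ∨ v ∈ C

/-- A minimum vertex cover of `G`. -/
def IsMinVertexCover (G : SimpleGraph V) [Fintype V] (C : Finset V) : Prop :=
  IsVertexCover G C ∧ ∀ C' : Finset V, IsVertexCover G C' → C.card ≤ C'.card

lemma stabNum_anti {V : Type*} [Fintype V] {G H : SimpleGraph V} (h : H ≤ G) :
    stabNum G ≤ stabNum H := by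
  apply csSup_le_csSup
  · exact ⟨Fintype.card V, fun n ⟨S, _, hS⟩ => hS ▸ S.card_le_univ⟩
  · exact ⟨0, ∅, fun u hu => absurd hu (by simp), by simp⟩
  · rintro n ⟨S, hS, rfl⟩
    exact ⟨S, fun u hu v hv hadj => hS u hu v hv (h hadj), rfl⟩

/-- If a graph `G` has a spanning subgraph `H` that is α⁻-stable
and satisfies `α(H) = α(G)`, then `G` itself is α⁻-stable. -/
theorem stmt0 {V : Type*} [Fintype V] (G H : SimpleGraph V)
    (hHG : H ≤ G) (hH : AlphaMinusStable H) (hα : stabNum H = stabNum G) :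
    AlphaMinusStable G := by
  intro u v huv
  have hGd : G.deleteEdges {s(u, v)} ≤ G := SimpleGraph.deleteEdges_le _
  by_cases he : H.Adj u v
  · have h1 : H.deleteEdges {s(u, v)} ≤ G.deleteEdges {s(u, v)} := by
      intro a b hab
      rw [SimpleGraph.deleteEdges_adj] at hab ⊢
      exact ⟨hHG hab.1, hab.2⟩
    have := stabNum_anti h1
    have := stabNum_anti hGd
    have := hH u v he
    omega
  · have h1 : H ≤ G.deleteEdges {s(u, v)} := by
      intro a b hab
      rw [SimpleGraph.deleteEdges_adj]
      refine ⟨hHG hab, ?_⟩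
      simp only [Set.mem_singleton_iff, Sym2.eq, Sym2.rel_iff', Prod.mk.injEq, Prod.swap_prod_mk]
      rintro (⟨rfl, rfl⟩ | ⟨rfl, rfl⟩)
      · exact he hab
      · exact he hab.symm
    have := stabNum_anti h1
    have := stabNum_anti hGd
    omega
end

section
/- Every unique independence graph is α⁻-stable. -/
open Finset

variable {V : Type*}

lemma bddAbove_stabSet {V : Type*} [Fintype V] (G : SimpleGraph V) :
    BddAbove {n : ℕ | ∃ S : Finset V, IsStableSet G S ∧ S.card = n} :=
  ⟨Fintype.card V, fun n hn => by
    obtain ⟨S, _, hc⟩ := hn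
    simpa [← hc] using Finset.card_le_univ S⟩

lemma le_stabNum {V : Type*} [Fintype V] {G : SimpleGraph V} {S : Finset V}
    (hS : IsStableSet G S) : S.card ≤ stabNum G :=
  le_csSup (bddAbove_stabSet G) ⟨S, hS, rfl⟩

lemma exists_stabSystem {V : Type*} [Fintype V] (G : SimpleGraph V) :
    ∃ S : Finset V, IsStabSystem G S := by
  have hmem : stabNum G ∈ {n : ℕ | ∃ S : Finset V, IsStableSet G S ∧ S.card = n} :=
    Nat.sSup_mem ⟨0, ∅, fun u hu => absurd hu (by simp), rfl⟩ (bddAbove_stabSet G)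
  obtain ⟨S, hS, hc⟩ := hmem
  exact ⟨S, hS, hc⟩

lemma stable_subset {V : Type*} {G : SimpleGraph V} {S T : Finset V}
    (hT : T ⊆ S) (hS : IsStableSet G S) : IsStableSet G T :=
  fun u hu v hv => hS u (hT hu) v (hT hv)

/-- Every unique independence graph is α⁻-stable. -/
theorem stmt1 {V : Type*} [Fintype V] (G : SimpleGraph V)
    (h : ∃! S : Finset V, IsStabSystem G S) :
    AlphaMinusStable G := by
  classical
  intro u v huv
  set G' := G.deleteEdges {s(u, v)} with hG'
  obtain ⟨S, hS, hUniq⟩ := h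
  -- any stable set of G' missing u or v is stable in G
  have key : ∀ T : Finset V, IsStableSet G' T → (u ∉ T ∨ v ∉ T) → IsStableSet G T := by
    intro T hT hmiss a ha b hb hab
    refine hT a ha b hb ?_
    rw [hG', SimpleGraph.deleteEdges_adj]
    refine ⟨hab, ?_⟩
    simp only [Set.mem_singleton_iff, Sym2.eq, Sym2.rel_iff', Prod.mk.injEq, Prod.swap_prod_mk]
    rintro (⟨rfl, rfl⟩ | ⟨rfl, rfl⟩) <;>
      rcases hmiss with hm | hm <;> exact hm (by assumption)
  -- stable sets of G are stable in G'
  have mono : ∀ T : Finset V, IsStableSet G T → IsStableSet G' T := by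
    intro T hT a ha b hb hab
    exact hT a ha b hb (SimpleGraph.deleteEdges_adj.1 hab).1
  have hge : stabNum G ≤ stabNum G' := by
    rw [← hS.2]
    exact le_stabNum (mono S hS.1)
  refine le_antisymm ?_ hge
  obtain ⟨T, hT, hTc⟩ := exists_stabSystem G'
  by_contra hlt
  push_neg at hlt
  have huT : u ∈ T := by
    by_contra hu
    exact absurd (le_stabNum (key T hT (Or.inl hu))) (by omega)
  have hvT : v ∈ T := by
    by_contra hv
    exact absurd (le_stabNum (key T hT (Or.inr hv))) (by omega)
  have hne : u ≠ v := huv.ne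
  -- T.erase u and T.erase v are stable in G
  have hTu : IsStableSet G (T.erase u) :=
    key _ (stable_subset (Finset.erase_subset _ _) hT) (Or.inl (Finset.notMem_erase _ _))
  have hTv : IsStableSet G (T.erase v) :=
    key _ (stable_subset (Finset.erase_subset _ _) hT) (Or.inr (Finset.notMem_erase _ _))
  have hcu : (T.erase u).card = T.card - 1 := Finset.card_erase_of_mem huT
  have hcv : (T.erase v).card = T.card - 1 := Finset.card_erase_of_mem hvT
  have hle1 : (T.erase u).card ≤ stabNum G := le_stabNum hTu
  have hTcard : T.card = stabNum G' := hTc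
  have hTpos : 0 < T.card := Finset.card_pos.2 ⟨u, huT⟩
  have hcard_eq : T.card - 1 = stabNum G := by omega
  have hsysu : IsStabSystem G (T.erase u) := ⟨hTu, by omega⟩
  have hsysv : IsStabSystem G (T.erase v) := ⟨hTv, by omega⟩
  have h1 := hUniq _ hsysu
  have h2 := hUniq _ hsysv
  have : v ∈ T.erase v := by
    rw [h2, ← h1]
    exact Finset.mem_erase.2 ⟨hne.symm, hvT⟩
  exact Finset.notMem_erase _ _ this
end

section
/- For any chordal graph G, the following assertions are equivalent: (i) G is α⁻-stable; (ii) G has a stability system which is a 2-dominating set of G; (iii) G has a unique stability system. -/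
open Finset

variable {V : Type*}

/-!
α⁻-stability makes every stability system `S` 2-dominating: a vertex `x ∉ S` with a single
neighbour `y` in `S` could be added to `S` once the edge `xy` is deleted. Conversely a unique
stability system forces α⁻-stability. The chordal case is (ii) ⇒ (iii): if `S` is a
2-dominating stability system and `T ≠ S` another one, the stable sets `A = T \ S` and
`B = S \ T` have equal size and induce a bipartite chordal graph. Such a graph is a forest, since
its shortest cycle would be induced and even, hence of length at least four. Removing leaves,
a forest in which every vertex of `A` has two neighbours in `B` has `|A| < |B|`.
-/

open SimpleGraph

theorem Fin.val_sub_eq_ite {n : ℕ} (a b : Fin n) :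
    ((a - b : Fin n) : ℕ) = if b.val ≤ a.val then a.val - b.val else n + a.val - b.val := by
  split_ifs with h
  · exact Fin.sub_val_of_le h
  · exact Fin.coe_sub_iff_lt.2 (not_le.1 h)

theorem SimpleGraph.cycleGraph_adj_iff_val {n : ℕ} {u v : Fin n} (hn : 2 ≤ n) :
    (cycleGraph n).Adj u v ↔ u.val + 1 = v.val ∨ v.val + 1 = u.val ∨
      (u.val = 0 ∧ v.val = n - 1) ∨ (v.val = 0 ∧ u.val = n - 1) := by
  have := u.isLt; have := v.isLt
  rw [cycleGraph_adj', Fin.val_sub_eq_ite, Fin.val_sub_eq_ite]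
  split_ifs <;> omega

section StableSet

variable {G : SimpleGraph V} {S T : Finset V}

theorem IsStableSet.mono (hT : IsStableSet G T) (h : S ⊆ T) : IsStableSet G S :=
  fun u hu v hv => hT u (h hu) v (h hv)

theorem isStableSet_insert [DecidableEq V] {x : V} :
    IsStableSet G (insert x S) ↔ IsStableSet G S ∧ ∀ y ∈ S, ¬ G.Adj x y := by
  refine ⟨fun h => ⟨h.mono (Finset.subset_insert x S),
    fun y hy => h x (Finset.mem_insert_self x S) y (Finset.mem_insert_of_mem hy)⟩, ?_⟩
  rintro ⟨hS, hx⟩ a ha b hb hab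
  rw [Finset.mem_insert] at ha hb
  rcases ha with rfl | ha
  · rcases hb with rfl | hb
    · exact hab.ne rfl
    · exact hx b hb hab
  · rcases hb with rfl | hb
    · exact hx a ha hab.symm
    · exact hS a ha b hb hab

theorem IsStableSet.deleteEdges (hS : IsStableSet G S) (s : Set (Sym2 V)) :
    IsStableSet (G.deleteEdges s) S :=
  fun a ha b hb hab => hS a ha b hb hab.1

theorem IsStableSet.of_deleteEdges {u v : V} (hS : IsStableSet (G.deleteEdges {s(u, v)}) S)
    (huv : ¬ (u ∈ S ∧ v ∈ S)) : IsStableSet G S := by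
  intro a ha b hb hab
  refine hS a ha b hb ?_
  rw [SimpleGraph.deleteEdges_adj, Set.mem_singleton_iff]
  refine ⟨hab, fun he => huv ?_⟩
  rcases Sym2.eq_iff.1 he with ⟨rfl, rfl⟩ | ⟨rfl, rfl⟩
  · exact ⟨ha, hb⟩
  · exact ⟨hb, ha⟩

theorem is2Dominating_iff [DecidableRel G.Adj] {D : Finset V} :
    Is2Dominating G D ↔ ∀ v ∉ D, 2 ≤ #(D.filter (G.Adj v)) := by
  simp only [Is2Dominating, ← Finset.coe_filter, Set.ncard_coe_finset]

theorem IsStableSet.mem_iff_notMem_of_adj [DecidableEq V] (hS : IsStableSet G S)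
    (hT : IsStableSet G T) {x y : V} (hx : x ∈ S ∪ T) (hy : y ∈ S ∪ T) (hxy : G.Adj x y) :
    x ∈ S ↔ y ∉ S := by
  refine ⟨fun hxS hyS => hS x hxS y hyS hxy, fun hyS => ?_⟩
  rw [Finset.mem_union] at hx hy
  exact hx.resolve_right fun hxT => hT x hxT y (hy.resolve_left hyS) hxy

end StableSet

section Cycles

variable {G : SimpleGraph V} {W : Finset V}

def HasPathIn (G : SimpleGraph V) (W : Finset V) (n : ℕ) : Prop :=
  ∃ f : (pathGraph (n + 1)).Copy G, ∀ i, f i ∈ W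

def HasCycleIn (G : SimpleGraph V) (W : Finset V) (n : ℕ) : Prop :=
  3 ≤ n ∧ ∃ f : (cycleGraph n).Copy G, ∀ i, f i ∈ W

theorem HasPathIn.succ_le_card {n : ℕ} (h : HasPathIn G W n) : n + 1 ≤ #W := by
  obtain ⟨f, hfW⟩ := h
  simpa using Finset.card_le_card_of_injOn (s := Finset.univ) f (fun i _ => hfW i)
    f.injective.injOn

theorem hasPathIn_zero (hW : W.Nonempty) : HasPathIn G W 0 := by
  obtain ⟨x, hx⟩ := hW
  exact ⟨⟨⟨fun _ => x, fun h => absurd h (by simp [pathGraph_adj])⟩,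
    fun i j _ => Fin.subsingleton_one.elim i j⟩, fun _ => hx⟩

theorem HasPathIn.snoc {n : ℕ} {f : (pathGraph (n + 1)).Copy G} (hfW : ∀ i, f i ∈ W) {y : V}
    (hy : y ∈ W) (hyf : y ∉ Set.range f) (hadj : G.Adj (f (Fin.last n)) y) :
    HasPathIn G W (n + 1) := by
  have hstep : ∀ i j : Fin (n + 2), i.val + 1 = j.val →
      G.Adj (Fin.snoc (α := fun _ => V) f y i) (Fin.snoc (α := fun _ => V) f y j) := by
    intro i j hij
    induction j using Fin.lastCases with
    | last =>
      obtain rfl : i = (Fin.last n).castSucc :=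
        Fin.ext (by simp only [Fin.val_last, Fin.val_castSucc] at hij ⊢; omega)
      simpa using hadj
    | cast j =>
      obtain ⟨i, rfl⟩ : ∃ i' : Fin (n + 1), i = i'.castSucc :=
        ⟨⟨i, by simp only [Fin.val_castSucc] at hij; omega⟩, rfl⟩
      simpa using f.toHom.map_adj (pathGraph_adj.2 (Or.inl (by simpa using hij)))
  refine ⟨⟨⟨Fin.snoc (α := fun _ => V) f y, fun {i j} hij => ?_⟩,
    Fin.snoc_injective_iff.2 ⟨f.injective, hyf⟩⟩, fun i => ?_⟩
  · rcases pathGraph_adj.1 hij with h | h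
    · exact hstep i j h
    · exact (hstep j i h).symm
  · induction i using Fin.lastCases with
    | last => simpa using hy
    | cast i => simpa using hfW i

theorem hasCycleIn_of_path_of_adj {n : ℕ} (f : (pathGraph n).Copy G) (hfW : ∀ i, f i ∈ W)
    {a b : Fin n} (hab : a.val + 2 ≤ b.val) (hadj : G.Adj (f a) (f b)) :
    HasCycleIn G W (b.val - a.val + 1) := by
  have hf : ∀ i j : Fin n, i.val + 1 = j.val → G.Adj (f i) (f j) := fun i j h =>
    f.toHom.map_adj (pathGraph_adj.2 (Or.inl h))
  refine ⟨by omega, ⟨⟨fun k => f ⟨a.val + k.val, by omega⟩, fun {k l} hkl => ?_⟩,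
    fun k l hkl => ?_⟩, fun k => hfW _⟩
  · rw [cycleGraph_adj_iff_val (by omega)] at hkl
    rcases hkl with h | h | ⟨hk, hl⟩ | ⟨hl, hk⟩
    · exact hf _ _ (by simp only; omega)
    · exact (hf _ _ (by simp only; omega)).symm
    · convert hadj using 2 <;> ext <;> simp only <;> omega
    · convert hadj.symm using 2 <;> ext <;> simp only <;> omega
  · have := f.injective hkl
    simp only [Fin.ext_iff] at this ⊢
    omega

section

variable [DecidableRel G.Adj]

theorem HasPathIn.succ_or_hasCycleIn {n : ℕ} (h : HasPathIn G W n)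
    (hdeg : ∀ x ∈ W, 2 ≤ #(W.filter (G.Adj x))) :
    HasPathIn G W (n + 1) ∨ ∃ m, HasCycleIn G W m := by
  obtain ⟨f, hfW⟩ := h
  by_cases hext : ∃ y ∈ W, G.Adj (f (Fin.last n)) y ∧ y ∉ Set.range f
  · obtain ⟨y, hy, hadj, hyf⟩ := hext
    exact Or.inl (HasPathIn.snoc hfW hy hyf hadj)
  push Not at hext
  obtain ⟨y₁, hy₁, y₂, hy₂, hne⟩ := Finset.one_lt_card.1 (hdeg _ (hfW (Fin.last n)))
  rw [Finset.mem_filter] at hy₁ hy₂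
  obtain ⟨j₁, rfl⟩ := hext y₁ hy₁.1 hy₁.2
  obtain ⟨j₂, rfl⟩ := hext y₂ hy₂.1 hy₂.2
  have hlast : ∀ j, G.Adj (f (Fin.last n)) (f j) → j.val < n := fun j hj =>
    lt_of_le_of_ne (Fin.le_last j) fun h => hj.ne (congrArg f (Fin.ext h.symm))
  have hj : ∃ j, G.Adj (f (Fin.last n)) (f j) ∧ j.val + 2 ≤ n := by
    have h₁ := hlast j₁ hy₁.2
    have h₂ := hlast j₂ hy₂.2
    have : j₁.val ≠ j₂.val := fun h => hne (congrArg f (Fin.ext h))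
    by_cases hj₁ : j₁.val + 2 ≤ n
    · exact ⟨j₁, hy₁.2, hj₁⟩
    · exact ⟨j₂, hy₂.2, by omega⟩
  obtain ⟨j, hadj, hjn⟩ := hj
  exact Or.inr
    ⟨_, hasCycleIn_of_path_of_adj f hfW (b := Fin.last n) (by simpa using hjn) hadj.symm⟩

theorem exists_hasCycleIn (hW : W.Nonempty) (hdeg : ∀ x ∈ W, 2 ≤ #(W.filter (G.Adj x))) :
    ∃ m, HasCycleIn G W m := by
  by_contra hno
  have hpath : ∀ n, HasPathIn G W n := by
    intro n
    induction n with
    | zero => exact hasPathIn_zero hW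
    | succ n ih => exact (ih.succ_or_hasCycleIn hdeg).resolve_right hno
  have := (hpath #W).succ_le_card
  omega

end

/-- A shortest cycle is induced: a chord would close a shorter one. -/
theorem exists_embedding_cycleGraph_of_hasCycleIn (h : ∃ m, HasCycleIn G W m) :
    ∃ m, 3 ≤ m ∧ ∃ e : cycleGraph m ↪g G, ∀ i, e i ∈ W := by
  classical
  set m := Nat.find h
  obtain ⟨hm, g, hgW⟩ : HasCycleIn G W m := Nat.find_spec h
  have hchord :
      ∀ a b : Fin m, a.val < b.val → G.Adj (g a) (g b) → (cycleGraph m).Adj a b := by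
    intro a b hab hadj
    by_contra hnadj
    rw [cycleGraph_adj_iff_val (by omega)] at hnadj
    have hcyc := hasCycleIn_of_path_of_adj (g.comp (Copy.ofLE _ _ pathGraph_le_cycleGraph))
      hgW (a := a) (b := b) (by omega) hadj
    exact Nat.find_min h (by omega) hcyc
  refine ⟨m, hm, ⟨g.toEmbedding, fun {a b} => ⟨fun hadj => ?_, g.toHom.map_adj⟩⟩, hgW⟩
  rcases lt_trichotomy a.val b.val with hab | hab | hab
  · exact hchord a b hab hadj
  · exact absurd (congrArg g (Fin.ext hab)) hadj.ne
  · exact (hchord b a hab hadj.symm).symm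

end Cycles

section Bipartite

variable [DecidableEq V] {G : SimpleGraph V} {A B : Finset V}

theorem even_of_cycleGraph_hom (hA : IsStableSet G A) (hB : IsStableSet G B) {n : ℕ}
    (hn : 2 ≤ n) (g : cycleGraph n →g G) (hg : ∀ i, g i ∈ A ∪ B) : Even n := by
  have hcross : ∀ i j, (cycleGraph n).Adj i j → (g i ∈ A ↔ g j ∉ A) := fun i j h =>
    hA.mem_iff_notMem_of_adj hB (hg i) (hg j) (g.map_adj h)
  have hpar : ∀ (i : ℕ) (hi : i < n),
      g ⟨i, hi⟩ ∈ A ↔ (g ⟨0, by omega⟩ ∈ A ↔ Even i) := by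
    intro i
    induction i with
    | zero => simp
    | succ k ih =>
      intro hi
      have hstep :=
        hcross ⟨k, by omega⟩ ⟨k + 1, hi⟩ ((cycleGraph_adj_iff_val hn).2 (Or.inl rfl))
      have := ih (by omega)
      rw [Nat.even_add_one]
      tauto
  have hclose := hcross ⟨n - 1, by omega⟩ ⟨0, by omega⟩
    ((cycleGraph_adj_iff_val hn).2 (Or.inr (Or.inr (Or.inr ⟨rfl, rfl⟩))))
  have hodd : ¬ Even (n - 1) := by
    have := hpar (n - 1) (by omega)
    tauto
  obtain ⟨k, rfl⟩ : ∃ k, n = k + 1 := ⟨n - 1, by omega⟩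
  simpa [Nat.even_add_one] using hodd

end Bipartite

section Chordal

variable {G : SimpleGraph V} [DecidableRel G.Adj] {A B : Finset V}

theorem IsChordal.exists_card_adj_le_one [DecidableEq V] (hch : IsChordal G)
    (hA : IsStableSet G A) (hB : IsStableSet G B) (hne : (A ∪ B).Nonempty) :
    ∃ x ∈ A ∪ B, #((A ∪ B).filter (G.Adj x)) ≤ 1 := by
  by_contra! hdeg
  obtain ⟨m, hm, e, heW⟩ :=
    exists_embedding_cycleGraph_of_hasCycleIn (exists_hasCycleIn hne hdeg)
  have hm4 : 4 ≤ m := by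
    obtain ⟨k, rfl⟩ := even_of_cycleGraph_hom hA hB (by omega) e.toHom heW
    omega
  exact (hch m hm4).false e

theorem IsChordal.card_lt_of_two_le_card_adj (hch : IsChordal G) (hA : IsStableSet G A)
    (hB : IsStableSet G B) (hAne : A.Nonempty) (hdeg : ∀ a ∈ A, 2 ≤ #(B.filter (G.Adj a))) :
    #A < #B := by
  -- A vertex of `A` is no leaf, so removing a leaf `x ∈ B` costs `A` at most one vertex.
  classical
  induction B using Finset.strongInduction generalizing A with
  | H B ih =>
  obtain ⟨x, hx, hxdeg⟩ :=
    hch.exists_card_adj_le_one hA hB (hAne.mono Finset.subset_union_left)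
  have hxA : x ∉ A := fun hxA => by
    have := Finset.card_le_card (Finset.filter_subset_filter (G.Adj x)
      (Finset.subset_union_right (s₁ := A) (s₂ := B)))
    have := hdeg x hxA
    omega
  have hxB : x ∈ B := (Finset.mem_union.1 hx).resolve_left hxA
  have hA'card : #A ≤ #(A.filter fun a => ¬ G.Adj x a) + 1 := by
    have := Finset.card_le_card (Finset.filter_subset_filter (G.Adj x)
      (Finset.subset_union_left (s₁ := A) (s₂ := B)))
    have := Finset.card_filter_add_card_filter_not (s := A) (G.Adj x)
    omega
  have hBcard : #(B.erase x) + 1 = #B := Finset.card_erase_add_one hxB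
  rcases (A.filter fun a => ¬ G.Adj x a).eq_empty_or_nonempty with hA' | hA'
  · obtain ⟨a, ha⟩ := hAne
    have := (hdeg a ha).trans (Finset.card_filter_le _ _)
    rw [hA', Finset.card_empty] at hA'card
    omega
  · have hdeg' :
        ∀ a ∈ A.filter (fun a => ¬ G.Adj x a), 2 ≤ #((B.erase x).filter (G.Adj a)) := by
      intro a ha
      rw [Finset.mem_filter] at ha
      rw [Finset.filter_erase,
        Finset.erase_eq_of_notMem fun h => ha.2 (Finset.mem_filter.1 h).2.symm]
      exact hdeg a ha.1
    have := ih (B.erase x) (Finset.erase_ssubset hxB) (hA.mono (Finset.filter_subset _ _))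
      (hB.mono (Finset.erase_subset _ _)) hA' hdeg'
    omega

end Chordal

section Stability

variable {G : SimpleGraph V} [Fintype V] {S T : Finset V}

theorem bddAbove_card_isStableSet (G : SimpleGraph V) :
    BddAbove {n : ℕ | ∃ S : Finset V, IsStableSet G S ∧ #S = n} :=
  ⟨Fintype.card V, fun _ ⟨S, _, hS⟩ => hS ▸ S.card_le_univ⟩

theorem IsStableSet.card_le_stabNum (hS : IsStableSet G S) : #S ≤ stabNum G :=
  le_csSup (bddAbove_card_isStableSet G) ⟨S, hS, rfl⟩

theorem IsStableSet.isStabSystem (hS : IsStableSet G S) (h : stabNum G ≤ #S) :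
    IsStabSystem G S :=
  ⟨hS, le_antisymm hS.card_le_stabNum h⟩

theorem exists_isStabSystem (G : SimpleGraph V) : ∃ S, IsStabSystem G S :=
  Nat.sSup_mem (s := {n : ℕ | ∃ S : Finset V, IsStableSet G S ∧ #S = n})
    ⟨0, ∅, fun _ hu => absurd hu (Finset.notMem_empty _), rfl⟩ (bddAbove_card_isStableSet G)

theorem IsStabSystem.exists_adj_of_notMem (hS : IsStabSystem G S) {x : V} (hx : x ∉ S) :
    ∃ y ∈ S, G.Adj x y := by
  classical
  by_contra! h
  have := (isStableSet_insert.2 ⟨hS.1, h⟩).card_le_stabNum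
  rw [Finset.card_insert_of_notMem hx, hS.2] at this
  omega

theorem stabNum_le_stabNum_deleteEdges (G : SimpleGraph V) (s : Set (Sym2 V)) :
    stabNum G ≤ stabNum (G.deleteEdges s) := by
  obtain ⟨S, hS, hcard⟩ := exists_isStabSystem G
  exact hcard ▸ (hS.deleteEdges s).card_le_stabNum

/-- If `G - uv` had a larger stable set `T`, it would contain `u` and `v`, and `T - u`, `T - v`
would be two different stability systems of `G`. -/
theorem alphaMinusStable_of_existsUnique (h : ∃! S, IsStabSystem G S) : AlphaMinusStable G := by
  classical
  intro u v huv
  obtain ⟨S, -, huniq⟩ := h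
  obtain ⟨T, hT, hTcard⟩ := exists_isStabSystem (G.deleteEdges {s(u, v)})
  refine le_antisymm ?_ (stabNum_le_stabNum_deleteEdges G _)
  rw [← hTcard]
  by_cases huvT : u ∈ T ∧ v ∈ T
  · by_contra! hlt
    have herase : ∀ w ∈ T, w = u ∨ w = v → T.erase w = S := by
      rintro w hw huvw
      refine huniq _ (((hT.mono (Finset.erase_subset w T)).of_deleteEdges ?_).isStabSystem ?_)
      · rintro ⟨hu, hv⟩
        rcases huvw with rfl | rfl
        · exact Finset.notMem_erase w T hu
        · exact Finset.notMem_erase w T hv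
      · rw [Finset.card_erase_of_mem hw]
        omega
    have hu : u ∈ T.erase v := Finset.mem_erase.2 ⟨huv.ne, huvT.1⟩
    rw [herase v huvT.2 (Or.inr rfl), ← herase u huvT.1 (Or.inl rfl)] at hu
    exact Finset.notMem_erase u T hu
  · exact (hT.of_deleteEdges huvT).card_le_stabNum

theorem IsStabSystem.is2Dominating (hS : IsStabSystem G S) (h : AlphaMinusStable G) :
    Is2Dominating G S := by
  classical
  rw [is2Dominating_iff]
  intro x hx
  by_contra! hlt
  obtain ⟨y, hy, hxy⟩ := hS.exists_adj_of_notMem hx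
  have huniq : ∀ z ∈ S, G.Adj x z → z = y := fun z hz hxz =>
    Finset.card_le_one.1 (by omega) z (Finset.mem_filter.2 ⟨hz, hxz⟩) y
      (Finset.mem_filter.2 ⟨hy, hxy⟩)
  have hstab : IsStableSet (G.deleteEdges {s(x, y)}) (insert x S) := by
    refine isStableSet_insert.2 ⟨hS.1.deleteEdges _, fun z hz hadj => ?_⟩
    rw [SimpleGraph.deleteEdges_adj] at hadj
    exact hadj.2 (by rw [huniq z hz hadj.1]; rfl)
  have := hstab.card_le_stabNum
  rw [Finset.card_insert_of_notMem hx, h x y hxy, hS.2] at this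
  omega

theorem IsChordal.eq_of_is2Dominating (hch : IsChordal G) (hS : IsStabSystem G S)
    (hdom : Is2Dominating G S) (hT : IsStabSystem G T) : T = S := by
  classical
  by_contra hne
  have hcard : #(T \ S) = #(S \ T) := Finset.card_sdiff_comm (hT.2.trans hS.2.symm)
  have hTS : (T \ S).Nonempty := Finset.sdiff_nonempty.2 fun hsub =>
    hne (Finset.eq_of_subset_of_card_le hsub (by rw [hS.2, hT.2]))
  have hdeg : ∀ a ∈ T \ S, 2 ≤ #((S \ T).filter (G.Adj a)) := by
    intro a ha
    rw [Finset.mem_sdiff] at ha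
    refine (is2Dominating_iff.1 hdom a ha.2).trans (Finset.card_le_card fun y hy => ?_)
    rw [Finset.mem_filter] at hy ⊢
    exact ⟨Finset.mem_sdiff.2 ⟨hy.1, fun hyT => hT.1 a ha.1 y hyT hy.2⟩, hy.2⟩
  have := hch.card_lt_of_two_le_card_adj (hT.1.mono Finset.sdiff_subset)
    (hS.1.mono Finset.sdiff_subset) hTS hdeg
  omega

end Stability

/-- For a chordal graph `G`, the following are equivalent:
(i) `G` is α⁻-stable; (ii) `G` has a stability system which is 2-dominating;
(iii) `G` has a unique stability system. -/
theorem stmt2 {V : Type*} [Fintype V] (G : SimpleGraph V) (hch : IsChordal G) :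
    (AlphaMinusStable G ↔ ∃ S : Finset V, IsStabSystem G S ∧ Is2Dominating G S) ∧
    (AlphaMinusStable G ↔ ∃! S : Finset V, IsStabSystem G S) := by
  have h12 : AlphaMinusStable G → ∃ S, IsStabSystem G S ∧ Is2Dominating G S := fun h =>
    let ⟨S, hS⟩ := exists_isStabSystem G
    ⟨S, hS, hS.is2Dominating h⟩
  have h23 : (∃ S, IsStabSystem G S ∧ Is2Dominating G S) → ∃! S, IsStabSystem G S :=
    fun ⟨S, hS, hdom⟩ => ⟨S, hS, fun _ hT => hch.eq_of_is2Dominating hS hdom hT⟩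
  exact ⟨⟨h12, fun h => alphaMinusStable_of_existsUnique (h23 h)⟩,
    ⟨fun h => h23 (h12 h), alphaMinusStable_of_existsUnique⟩⟩
end

section
/- If G is a connected graph having two disjoint stability systems S₁ and S₂ whose union is the whole vertex set of G, then G is bipartite, {S₁, S₂} is the only partition of the vertex set of G into two stable sets, and G is α⁺-stable. -/
open Finset

variable {V : Type*}

lemma stab_card_le' {V : Type*} [Fintype V] (G : SimpleGraph V) (S : Finset V)
    (h : IsStableSet G S) : S.card ≤ stabNum G :=
  le_csSup ⟨Fintype.card V, by rintro n ⟨S, -, rfl⟩; exact S.card_le_univ⟩ ⟨S, h, rfl⟩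

lemma walk_parity' {V : Type*} [Fintype V] [DecidableEq V] (G : SimpleGraph V)
    (A : Finset V) (hA : IsStableSet G A) (hAc : IsStableSet G Aᶜ)
    {u v : V} (p : G.Walk u v) : (u ∈ A ↔ v ∈ A) ↔ Even p.length := by
  induction p with
  | nil => simp
  | @cons u w v h p ih =>
    have h1 : ¬ (u ∈ A ∧ w ∈ A) := fun ⟨hu, hw⟩ => hA u hu w hw h
    have h2 : ¬ (u ∉ A ∧ w ∉ A) := fun ⟨hu, hw⟩ =>
      hAc u (Finset.mem_compl.2 hu) w (Finset.mem_compl.2 hw) h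
    simp only [SimpleGraph.Walk.length_cons, Nat.even_add_one]
    rw [← ih]; tauto

lemma bipartition_unique' {V : Type*} [Fintype V] [DecidableEq V] (G : SimpleGraph V)
    (hc : G.Connected) (A C : Finset V) (hA : IsStableSet G A) (hAc : IsStableSet G Aᶜ)
    (hC : IsStableSet G C) (hCc : IsStableSet G Cᶜ) : C = A ∨ C = Aᶜ := by
  obtain ⟨w⟩ := hc.nonempty
  have key : ∀ v : V, ((w ∈ A ↔ v ∈ A) ↔ (w ∈ C ↔ v ∈ C)) := by
    intro v
    obtain ⟨p⟩ := hc.preconnected w v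
    rw [walk_parity' G A hA hAc p, walk_parity' G C hC hCc p]
  by_cases hw : (w ∈ A ↔ w ∈ C)
  · left; ext v; have := key v; tauto
  · right; ext v; simp only [Finset.mem_compl]; have := key v; tauto

/-- If a connected graph `G` has two disjoint stability systems
whose union is the vertex set, then `G` is bipartite, this pair is its only
partition into two stable sets, and `G` is α⁺-stable. -/
theorem stmt9 {V : Type*} [Fintype V] [DecidableEq V] (G : SimpleGraph V)
    (hc : G.Connected) (S₁ S₂ : Finset V)
    (h1 : IsStabSystem G S₁) (h2 : IsStabSystem G S₂)
    (hd : Disjoint S₁ S₂) (hu : S₁ ∪ S₂ = Finset.univ) :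
    IsBipartiteGr G ∧
    (∀ A B : Finset V, Disjoint A B → A ∪ B = Finset.univ →
      IsStableSet G A → IsStableSet G B → ({A, B} : Set (Finset V)) = {S₁, S₂}) ∧
    AlphaPlusStable G := by
  have hS2c : S₂ = S₁ᶜ := by
    ext v
    simp only [Finset.mem_compl]
    constructor
    · intro hv h1v
      exact (Finset.disjoint_left.1 hd) h1v hv
    · intro hv
      have : v ∈ S₁ ∪ S₂ := hu ▸ Finset.mem_univ v
      rcases Finset.mem_union.1 this with h | h
      · exact absurd h hv
      · exact h
  have hS1 : IsStableSet G S₁ := h1.1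
  have hS1c : IsStableSet G S₁ᶜ := hS2c ▸ h2.1
  refine ⟨⟨S₁, hS1, hS1c⟩, ?_, ?_⟩
  · intro A B hAB hABu hA hB
    have hBc : B = Aᶜ := by
      ext v
      simp only [Finset.mem_compl]
      constructor
      · intro hv h1v
        exact (Finset.disjoint_left.1 hAB) h1v hv
      · intro hv
        have : v ∈ A ∪ B := hABu ▸ Finset.mem_univ v
        rcases Finset.mem_union.1 this with h | h
        · exact absurd h hv
        · exact h
    subst hBc
    rcases bipartition_unique' G hc S₁ A hS1 hS1c hA hB with h | h
    · subst h; rw [hS2c]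
    · rw [h, hS2c, compl_compl, Set.pair_comm]
  · intro u v hne hnadj
    have hwit : ∃ S : Finset V, IsStableSet G S ∧ S.card = stabNum G ∧ ¬ (u ∈ S ∧ v ∈ S) := by
      by_cases h : u ∈ S₁ ∧ v ∈ S₁
      · exact ⟨S₂, h2.1, h2.2, fun ⟨hu2, _⟩ =>
          (Finset.disjoint_left.1 hd) h.1 hu2⟩
      · exact ⟨S₁, h1.1, h1.2, h⟩
    obtain ⟨S, hSst, hScard, hSuv⟩ := hwit
    have hS' : IsStableSet (G ⊔ SimpleGraph.fromEdgeSet {s(u, v)}) S := by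
      intro a ha b hb hadj
      rcases hadj with h | h
      · exact hSst a ha b hb h
      · have heq : s(a, b) = s(u, v) := h.1
        rw [Sym2.eq_iff] at heq
        rcases heq with ⟨rfl, rfl⟩ | ⟨rfl, rfl⟩
        · exact hSuv ⟨ha, hb⟩
        · exact hSuv ⟨hb, ha⟩
    apply le_antisymm
    · apply csSup_le ⟨0, by exact ⟨∅, fun a ha => absurd ha (by simp), by simp⟩⟩
      rintro n ⟨T, hT, rfl⟩
      apply stab_card_le'
      intro a ha b hb hadj
      exact hT a ha b hb (Or.inl hadj)
    · calc stabNum G = S.card := hScard.symm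
        _ ≤ _ := stab_card_le' _ S hS'
end
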